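/- arXiv:1609.00192 — 3 statements merged into one kernel-verified Lean document; each statement's English description precedes it below -/
import Mathlib

section
/- Let d be a natural number, δ > 1 and C ≥ 0. Then there exists a constant c > 0, depending only on C and δ, with the following property: for every differentiable curve y : ℝ → ℝ^d satisfying ‖y′(s)‖ ≤ C (1 + |s| + ‖y(s)‖)^{−δ} for all s ∈ ℝ, and for every s ∈ ℝ, one has 1 + |s| + ‖y(s)‖ ≥ c (1 + |s| + ‖y(0)‖). -/
open Set

/-- On `[0, s]`, a curve with the velocity decay stays within `C/(δ-1)` of its start. -/
lemma key_displacement_bound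
    (d : ℕ) (δ C : ℝ) (hδ : 1 < δ) (hC : 0 ≤ C)
    (y : ℝ → EuclideanSpace ℝ (Fin d)) (hy : Differentiable ℝ y)
    (hb : ∀ s : ℝ, ‖deriv y s‖ ≤ C * (1 + |s| + ‖y s‖) ^ (-δ))
    (s : ℝ) (hs : 0 ≤ s) : ‖y s - y 0‖ ≤ C / (δ - 1) := by
  set M : ℝ := C / (δ - 1) with hM
  have hδ0 : (0:ℝ) < δ - 1 := by linarith
  have hM0 : 0 ≤ M := div_nonneg hC hδ0.le
  set B : ℝ → ℝ := fun t => M * (1 - (1 + t) ^ (1 - δ)) with hBdef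
  set B' : ℝ → ℝ := fun t => C * (1 + t) ^ (-δ) with hB'def
  have hBderiv : ∀ t ∈ Ico (0:ℝ) s, HasDerivWithinAt B (B' t) (Ici t) t := by
    intro t ht
    have ht0 : (0:ℝ) < 1 + t := by linarith [ht.1]
    have h1 : HasDerivAt (fun u : ℝ => (1 + u) ^ (1 - δ))
        ((1 - δ) * (1 + t) ^ (1 - δ - 1) * 1) t := by
      exact (Real.hasDerivAt_rpow_const (Or.inl ht0.ne')).comp t
        (((hasDerivAt_id t).const_add 1))
    have h2 : HasDerivAt B (M * (0 - (1 - δ) * (1 + t) ^ (1 - δ - 1) * 1)) t := by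
      exact ((hasDerivAt_const t (1:ℝ)).sub h1).const_mul M
    have heq : M * (0 - (1 - δ) * (1 + t) ^ (1 - δ - 1) * 1) = B' t := by
      have : (1:ℝ) - δ - 1 = -δ := by ring
      rw [this, hB'def, hM]
      field_simp
      ring
    rw [heq] at h2
    exact h2.hasDerivWithinAt
  have hf' : ∀ t ∈ Ico (0:ℝ) s, HasDerivWithinAt (fun u => y u - y 0)
      (deriv y t) (Ici t) t := by
    intro t _
    exact (((hy t).hasDerivAt.sub_const (y 0))).hasDerivWithinAt
  have bound : ∀ t ∈ Ico (0:ℝ) s, ‖deriv y t‖ ≤ B' t := by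
    intro t ht
    refine (hb t).trans ?_
    have ht0 : (0:ℝ) < 1 + t := by linarith [ht.1]
    have h1 : (1:ℝ) + t ≤ 1 + |t| + ‖y t‖ := by
      have := abs_nonneg t
      have := norm_nonneg (y t)
      have : t ≤ |t| := le_abs_self t
      linarith [norm_nonneg (y t)]
    have := Real.rpow_le_rpow_of_nonpos ht0 h1 (by linarith : -δ ≤ 0)
    exact mul_le_mul_of_nonneg_left this hC
  have ha : ‖y 0 - y 0‖ ≤ B 0 := by
    simp [hBdef, Real.one_rpow]
  have hcont : ContinuousOn (fun u => y u - y 0) (Icc 0 s) :=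
    (hy.continuous.sub continuous_const).continuousOn
  have hBcont : ContinuousOn B (Icc 0 s) := by
    apply ContinuousOn.mul continuousOn_const
    apply ContinuousOn.sub continuousOn_const
    intro t ht
    have ht0 : (0:ℝ) < 1 + t := by linarith [ht.1]
    exact (Real.continuousAt_rpow_const _ _ (Or.inl ht0.ne')).comp
      (by continuity : Continuous fun u : ℝ => 1 + u).continuousAt |>.continuousWithinAt
  have := image_norm_le_of_norm_deriv_right_le_deriv_boundary' hcont hf' ha hBcont hBderiv bound
    (right_mem_Icc.mpr hs)
  refine this.trans ?_
  have hs0 : (0:ℝ) < 1 + s := by linarith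
  have h0 : (0:ℝ) ≤ (1 + s) ^ (1 - δ) := Real.rpow_nonneg hs0.le _
  show M * (1 - (1 + s) ^ (1 - δ)) ≤ M
  nlinarith

/-- Uniform lower bound on the space-time weight along curves with short-range velocity
decay: there is `c > 0`, depending only on `C` and `δ > 1`, such that every
differentiable curve `y` with `‖y′(s)‖ ≤ C (1+|s|+‖y(s)‖)^(-δ)` satisfies
`1+|s|+‖y(s)‖ ≥ c (1+|s|+‖y(0)‖)` for all `s`. -/
theorem spacetime_weight_lower_bound
    (d : ℕ) (δ C : ℝ) (hδ : 1 < δ) (hC : 0 ≤ C) :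
    ∃ c : ℝ, 0 < c ∧
      ∀ y : ℝ → EuclideanSpace ℝ (Fin d), Differentiable ℝ y →
        (∀ s : ℝ, ‖deriv y s‖ ≤ C * (1 + |s| + ‖y s‖) ^ (-δ)) →
        ∀ s : ℝ, c * (1 + |s| + ‖y 0‖) ≤ 1 + |s| + ‖y s‖ := by
  set M : ℝ := C / (δ - 1) with hM
  have hδ0 : (0:ℝ) < δ - 1 := by linarith
  have hM0 : 0 ≤ M := div_nonneg hC hδ0.le
  refine ⟨1 / (1 + M), by positivity, ?_⟩
  intro y hy hb s
  -- displacement bound for all s (both signs)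
  have hdisp : ‖y s - y 0‖ ≤ M := by
    rcases le_or_gt 0 s with hs | hs
    · exact key_displacement_bound d δ C hδ hC y hy hb s hs
    · -- apply to the reversed curve
      set z : ℝ → EuclideanSpace ℝ (Fin d) := fun t => y (-t) with hz
      have hzdiff : Differentiable ℝ z := hy.comp (differentiable_neg)
      have hzb : ∀ t : ℝ, ‖deriv z t‖ ≤ C * (1 + |t| + ‖z t‖) ^ (-δ) := by
        intro t
        have : deriv z t = -deriv y (-t) := deriv_comp_neg y t
        rw [this, norm_neg]
        simpa [hz, abs_neg] using hb (-t)
      have := key_displacement_bound d δ C hδ hC z hzdiff hzb (-s) (by linarith)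
      simpa [hz] using this
  have h1 : ‖y 0‖ - M ≤ ‖y s‖ := by
    have := norm_sub_norm_le (y s) (y 0)
    have h2 := norm_sub_rev (y s) (y 0)
    linarith [abs_le.mp (abs_norm_sub_norm_le (y s) (y 0))]
  have hA : (1:ℝ) ≤ 1 + |s| := by linarith [abs_nonneg s]
  have hB : (0:ℝ) ≤ ‖y s‖ := norm_nonneg _
  have hB0 : (0:ℝ) ≤ ‖y 0‖ := norm_nonneg _
  rw [div_mul_eq_mul_div, one_mul, div_le_iff₀ (by linarith : (0:ℝ) < 1 + M)]
  rcases le_or_gt (‖y 0‖) M with hcase | hcase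
  · nlinarith
  · nlinarith
end

section
/- Let H be a complex Hilbert space, let q ∈ B(H), let A : ℝ → B(H) be continuous in operator norm and satisfy A(t)* q = q A(t) for all t ∈ ℝ, and let U : ℝ × ℝ → B(H) satisfy: U(s, s) = 1 for all s, and for each fixed s ∈ ℝ and x ∈ H the map t ↦ U(t, s)x is differentiable with derivative (d/dt) U(t, s)x = i A(t) U(t, s) x. Then U(t, s)* q U(t, s) = q for all t, s ∈ ℝ. -/
/-!
Let `⟪x, y⟫_q := ⟪x, q y⟫`. The hypothesis `A(t)† q = q A(t)` says exactly that `i A(t)` is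
skew for this form, so for two solutions `u, v` of `u' = i A(t) u` the derivative
`⟪u', q v⟫ + ⟪u, q v'⟫` of `t ↦ ⟪u t, q (v t)⟫` vanishes. Applied to `u = U(·, s) x` and
`v = U(·, s) y`, this gives `⟪U(t, s) x, q U(t, s) y⟫ = ⟪x, q y⟫`.
-/

open ContinuousLinearMap

section

variable {H : Type*} [NormedAddCommGroup H] [InnerProductSpace ℂ H]

theorem hasDerivAt_inner_clm_apply (q : H →L[ℂ] H) {u v : ℝ → H} {u' v' : H} {t : ℝ}
    (hu : HasDerivAt u u' t) (hv : HasDerivAt v v' t) :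
    HasDerivAt (fun τ => inner ℂ (u τ) (q (v τ)))
      (inner ℂ (u t) (q v') + inner ℂ u' (q (v t))) t :=
  hu.inner ℂ ((q.restrictScalars ℝ).hasFDerivAt.comp_hasDerivAt t hv)

variable [CompleteSpace H]

theorem inner_apply_eq_inner_clm_apply_of_adjoint_comp_eq {q a : H →L[ℂ] H}
    (h : adjoint a ∘L q = q ∘L a) (x y : H) :
    inner ℂ (a x) (q y) = inner ℂ x (q (a y)) := by
  rw [← adjoint_inner_right, ← comp_apply, h, comp_apply]

theorem inner_clm_apply_add_inner_I_smul_eq_zero {q a : H →L[ℂ] H}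
    (h : adjoint a ∘L q = q ∘L a) (x y : H) :
    inner ℂ x (q (Complex.I • a y)) + inner ℂ (Complex.I • a x) (q y) = 0 := by
  rw [map_smul, inner_smul_right, inner_smul_left, Complex.conj_I,
    inner_apply_eq_inner_clm_apply_of_adjoint_comp_eq h]
  ring

theorem inner_clm_apply_eq_of_hasDerivAt_I_smul {q : H →L[ℂ] H} {A : ℝ → H →L[ℂ] H}
    (hAq : ∀ t, adjoint (A t) ∘L q = q ∘L A t) {u v : ℝ → H}
    (hu : ∀ t, HasDerivAt u (Complex.I • A t (u t)) t)
    (hv : ∀ t, HasDerivAt v (Complex.I • A t (v t)) t) (t s : ℝ) :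
    inner ℂ (u t) (q (v t)) = inner ℂ (u s) (q (v s)) := by
  have hderiv (τ : ℝ) : HasDerivAt (fun τ => inner ℂ (u τ) (q (v τ))) 0 τ := by
    simpa only [inner_clm_apply_add_inner_I_smul_eq_zero (hAq τ)]
      using hasDerivAt_inner_clm_apply q (hu τ) (hv τ)
  exact is_const_of_deriv_eq_zero (fun τ => (hderiv τ).differentiableAt)
    (fun τ => (hderiv τ).deriv) t s

end

theorem evolution_preserves_symplectic_form_general
    {H : Type*} [NormedAddCommGroup H] [InnerProductSpace ℂ H] [CompleteSpace H]
    (q : H →L[ℂ] H)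
    (A : ℝ → H →L[ℂ] H)
    (hAq : ∀ t : ℝ, ContinuousLinearMap.adjoint (A t) ∘L q = q ∘L A t)
    (U : ℝ → ℝ → H →L[ℂ] H)
    (hUid : ∀ s : ℝ, U s s = 1)
    (hUderiv : ∀ (s : ℝ) (x : H) (t : ℝ),
      HasDerivAt (fun t' : ℝ => U t' s x) (Complex.I • A t (U t s x)) t) :
    ∀ t s : ℝ, (ContinuousLinearMap.adjoint (U t s) ∘L q) ∘L U t s = q := by
  intro t s
  ext y
  refine ext_inner_left ℂ fun x => ?_
  rw [comp_apply, comp_apply, adjoint_inner_right]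
  simpa only [hUid, one_apply_eq_self]
    using inner_clm_apply_eq_of_hasDerivAt_I_smul hAq (hUderiv s x) (hUderiv s y) t s

/-- Conservation of a (possibly indefinite) sesquilinear form by the Cauchy evolution:
if `A(t)* q = q A(t)` and `U(t,s)` satisfies `U(s,s) = 1` and
`∂ₜ U(t,s) = i A(t) U(t,s)` (strongly), then `U(t,s)* q U(t,s) = q` for all `t, s`. -/
theorem evolution_preserves_symplectic_form
    {H : Type*} [NormedAddCommGroup H] [InnerProductSpace ℂ H] [CompleteSpace H]
    (q : H →L[ℂ] H)
    (A : ℝ → H →L[ℂ] H) (hA : Continuous A)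
    (hAq : ∀ t : ℝ, ContinuousLinearMap.adjoint (A t) ∘L q = q ∘L A t)
    (U : ℝ → ℝ → H →L[ℂ] H)
    (hUid : ∀ s : ℝ, U s s = 1)
    (hUderiv : ∀ (s : ℝ) (x : H) (t : ℝ),
      HasDerivAt (fun t' : ℝ => U t' s x) (Complex.I • A t (U t s x)) t) :
    ∀ t s : ℝ, (ContinuousLinearMap.adjoint (U t s) ∘L q) ∘L U t s = q :=
  evolution_preserves_symplectic_form_general q A hAq U hUid hUderiv
end

section
/- Let H be a complex Hilbert space, M ≥ 0, let A, A₀ : ℝ → B(H) be continuous in operator norm, and let U, U₀ : ℝ × ℝ → B(H) satisfy: ‖U(t, s)‖ ≤ M and ‖U₀(t, s)‖ ≤ M for all t, s; U(s, s) = U₀(s, s) = 1; for each x ∈ H the map t ↦ U(0, t)x is differentiable with derivative −i U(0, t) A(t) x, and the map t ↦ U₀(t, 0)x is differentiable with derivative i A₀(t) U₀(t, 0) x; and U(0, t) U(t, 0) = U(t, 0) U(0, t) = 1 and U₀(0, t) U₀(t, 0) = U₀(t, 0) U₀(0, t) = 1 for all t. Assume ∫₀^∞ ‖A(t) − A₀(t)‖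 dt < ∞. Then the limits W = lim_{t→+∞} U(0, t) U₀(t, 0) and V = lim_{t→+∞} U₀(0, t) U(t, 0) exist in the operator norm of B(H), and W V = V W = 1, so W is invertible with inverse V. -/
/-!
Cook's argument. With `φ t = U(0,t) U₀(t,0)` the evolution equations give
`φ'(t) x = i U(0,t) (A₀(t) - A(t)) U₀(t,0) x`, so `‖φ t - φ s‖ ≤ M² |∫ₛᵗ ‖A - A₀‖|`, and the
integrability of `‖A - A₀‖` makes `φ` Cauchy at `+∞`. The family `ψ t = U₀(0,t) U(t,0)` is a
two-sided inverse of `φ t` bounded by `M²`, so `ψ t - ψ s = ψ t (φ s - φ t) ψ s` makes `ψ`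
Cauchy as well, and the limits inherit the relations `φ t ψ t = ψ t φ t = 1`.
-/

open MeasureTheory Filter Topology

theorem cauchySeq_of_dist_le_mul_dist {ι X Y : Type*} [Nonempty ι] [SemilatticeSup ι]
    [PseudoMetricSpace X] [PseudoMetricSpace Y] {u : ι → X} {g : ι → Y} {C : ℝ}
    (hg : CauchySeq g)
    (h : ∀ᶠ p : ι × ι in atTop, dist (u p.1) (u p.2) ≤ C * dist (g p.1) (g p.2)) :
    CauchySeq u := by
  rw [cauchySeq_iff_tendsto_dist_atTop_0] at hg ⊢
  exact squeeze_zero' (Eventually.of_forall fun _ => dist_nonneg) h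
    (by simpa using hg.const_mul C)

theorem CauchySeq.of_mul_eq_one {R ι : Type*} [NormedRing R] [Nonempty ι] [SemilatticeSup ι]
    {u v : ι → R} {C : ℝ}
    (hu : CauchySeq u) (huv : ∀ i, u i * v i = 1) (hvu : ∀ i, v i * u i = 1)
    (hv : ∀ i, ‖v i‖ ≤ C) : CauchySeq v := by
  refine cauchySeq_of_dist_le_mul_dist (C := C * C) hu (Eventually.of_forall fun p => ?_)
  have hC : 0 ≤ C := (norm_nonneg _).trans (hv p.1)
  have hdiff : v p.2 - v p.1 = v p.2 * (u p.1 - u p.2) * v p.1 := by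
    rw [mul_sub, sub_mul, mul_assoc, huv, hvu, mul_one, one_mul]
  rw [dist_comm (v p.1), dist_eq_norm, dist_eq_norm, hdiff]
  calc ‖v p.2 * (u p.1 - u p.2) * v p.1‖ ≤ ‖v p.2‖ * ‖u p.1 - u p.2‖ * ‖v p.1‖ :=
        norm_mul₃_le
    _ ≤ C * ‖u p.1 - u p.2‖ * C := by gcongr <;> apply hv
    _ = C * C * ‖u p.1 - u p.2‖ := by ring

theorem mul_eq_one_of_tendsto {M ι : Type*} [Monoid M] [TopologicalSpace M] [ContinuousMul M]
    [T2Space M] {l : Filter ι} [l.NeBot] {u v : ι → M} {a b : M}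
    (hu : Tendsto u l (𝓝 a)) (hv : Tendsto v l (𝓝 b)) (huv : ∀ i, u i * v i = 1) :
    a * b = 1 :=
  tendsto_nhds_unique (hu.mul hv) (by simpa only [huv] using tendsto_const_nhds)

section StrongDerivative

variable {𝕜 E F : Type*} [NontriviallyNormedField 𝕜] [NormedAlgebra ℝ 𝕜]
  [NormedAddCommGroup E] [NormedSpace 𝕜 E] [NormedSpace ℝ E] [IsScalarTower ℝ 𝕜 E]
  [NormedAddCommGroup F] [NormedSpace 𝕜 F] [NormedSpace ℝ F] [IsScalarTower ℝ 𝕜 F]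

/-- Product rule for a strongly differentiable operator family: the local bound on `‖T s‖`
stands in for differentiability of `T` in operator norm. -/
theorem HasDerivAt.clm_apply_of_strong {T : ℝ → E →L[𝕜] F} {T' : E → F} {y : ℝ → E}
    {y' : E} {t M : ℝ} (hT : ∀ x, HasDerivAt (fun s => T s x) (T' x) t)
    (hTbd : ∀ᶠ s in 𝓝 t, ‖T s‖ ≤ M) (hy : HasDerivAt y y' t) :
    HasDerivAt (fun s => T s (y s)) (T' (y t) + T t y') t := by
  rw [hasDerivAt_iff_isLittleO]
  have hTyt := hasDerivAt_iff_isLittleO.1 (hT (y t))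
  have hTy : (fun s => T s (y s - y t - (s - t) • y')) =o[𝓝 t] fun s => s - t := by
    refine Asymptotics.IsBigO.trans_isLittleO ?_ (hasDerivAt_iff_isLittleO.1 hy)
    refine Asymptotics.IsBigO.of_bound M (hTbd.mono fun s hs => ?_)
    exact (T s).le_opNorm_of_le le_rfl |>.trans (by gcongr)
  have hTy' : (fun s => (s - t) • (T s y' - T t y')) =o[𝓝 t] fun s => s - t := by
    have hcont : Tendsto (fun s => T s y' - T t y') (𝓝 t) (𝓝 0) := by
      simpa using ((hT y').continuousAt.tendsto).sub_const (T t y')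
    simpa using (Asymptotics.isBigO_refl (fun s : ℝ => s - t) (𝓝 t)).smul_isLittleO
      ((Asymptotics.isLittleO_one_iff ℝ).2 hcont)
  refine ((hTyt.add hTy).add hTy').congr' (Eventually.of_forall fun s => ?_) EventuallyEq.rfl
  simp only [map_sub, ContinuousLinearMap.map_smul_of_tower, smul_add, smul_sub]
  abel

end StrongDerivative

theorem norm_sub_le_abs_integral_of_norm_deriv_le {E : Type*} [NormedAddCommGroup E]
    [NormedSpace ℝ E] [CompleteSpace E] {f f' : ℝ → E} {g : ℝ → ℝ} {s t : ℝ}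
    (hf : ∀ u, HasDerivAt f (f' u) u) (hg : IntervalIntegrable g volume s t)
    (hbound : ∀ u, ‖f' u‖ ≤ g u) : ‖f t - f s‖ ≤ |∫ u in s..t, g u| := by
  have hf' : deriv f = f' := funext fun u => (hf u).deriv
  have hint : IntervalIntegrable f' volume s t :=
    hg.mono_fun' (hf' ▸ (stronglyMeasurable_deriv f).aestronglyMeasurable) (ae_of_all _ hbound)
  rw [← intervalIntegral.integral_eq_sub_of_hasDerivAt (fun u _ => hf u) hint]
  exact intervalIntegral.norm_integral_le_abs_of_norm_le (ae_of_all _ hbound) hg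

section Cook

variable {H : Type*} [NormedAddCommGroup H] [NormedSpace ℂ H]
  {T S A A₀ : ℝ → H →L[ℂ] H} {M : ℝ}

theorem hasDerivAt_backward_mul_forward
    (hT : ∀ x t, HasDerivAt (fun t' => T t' x) (-(Complex.I • T t (A t x))) t)
    (hS : ∀ x t, HasDerivAt (fun t' => S t' x) (Complex.I • A₀ t (S t x)) t)
    (hTbd : ∀ t, ‖T t‖ ≤ M) (x : H) (t : ℝ) :
    HasDerivAt (fun t' => (T t' * S t') x) (Complex.I • T t ((A₀ t - A t) (S t x))) t := by
  have h := HasDerivAt.clm_apply_of_strong (hT · t) (Eventually.of_forall hTbd) (hS x t)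
  refine h.congr_deriv ?_
  simp only [sub_apply, map_sub, ContinuousLinearMap.map_smul, smul_sub]
  abel

variable [CompleteSpace H]

theorem norm_backward_mul_forward_sub_le
    (hT : ∀ x t, HasDerivAt (fun t' => T t' x) (-(Complex.I • T t (A t x))) t)
    (hS : ∀ x t, HasDerivAt (fun t' => S t' x) (Complex.I • A₀ t (S t x)) t)
    (hTbd : ∀ t, ‖T t‖ ≤ M) (hSbd : ∀ t, ‖S t‖ ≤ M) {s t : ℝ}
    (hb : IntervalIntegrable (fun u => ‖A u - A₀ u‖) volume s t) :
    ‖T t * S t - T s * S s‖ ≤ M * M * |∫ u in s..t, ‖A u - A₀ u‖| := by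
  have hM : 0 ≤ M := (norm_nonneg _).trans (hTbd 0)
  refine ContinuousLinearMap.opNorm_le_bound _ (by positivity) fun x => ?_
  have hderiv_le (u : ℝ) :
      ‖Complex.I • T u ((A₀ u - A u) (S u x))‖ ≤ M * M * ‖x‖ * ‖A u - A₀ u‖ := by
    rw [norm_smul, Complex.norm_I, one_mul, ← norm_neg (A u - A₀ u), neg_sub]
    calc ‖T u ((A₀ u - A u) (S u x))‖ ≤ ‖T u‖ * (‖A₀ u - A u‖ * (‖S u‖ * ‖x‖)) :=
          (T u).le_opNorm_of_le ((A₀ u - A u).le_opNorm_of_le ((S u).le_opNorm x))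
      _ ≤ M * (‖A₀ u - A u‖ * (M * ‖x‖)) := by gcongr <;> simp only [hTbd, hSbd]
      _ = M * M * ‖x‖ * ‖A₀ u - A u‖ := by ring
  calc ‖(T t * S t - T s * S s) x‖ = ‖(T t * S t) x - (T s * S s) x‖ := rfl
    _ ≤ |∫ u in s..t, M * M * ‖x‖ * ‖A u - A₀ u‖| :=
        norm_sub_le_abs_integral_of_norm_deriv_le
          (hasDerivAt_backward_mul_forward hT hS hTbd x) (hb.const_mul _) hderiv_le
    _ = M * M * |∫ u in s..t, ‖A u - A₀ u‖| * ‖x‖ := by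
        rw [intervalIntegral.integral_const_mul, abs_mul, abs_of_nonneg (by positivity)]
        ring

theorem cauchySeq_backward_mul_forward
    (hT : ∀ x t, HasDerivAt (fun t' => T t' x) (-(Complex.I • T t (A t x))) t)
    (hS : ∀ x t, HasDerivAt (fun t' => S t' x) (Complex.I • A₀ t (S t x)) t)
    (hTbd : ∀ t, ‖T t‖ ≤ M) (hSbd : ∀ t, ‖S t‖ ≤ M)
    (hb : IntegrableOn (fun u => ‖A u - A₀ u‖) (Set.Ici 0)) :
    CauchySeq fun t => T t * S t := by
  have hbI {a c : ℝ} (ha : 0 ≤ a) (hc : 0 ≤ c) :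
      IntervalIntegrable (fun u => ‖A u - A₀ u‖) volume a c :=
    (hb.mono_set fun u hu => (le_min ha hc).trans hu.1).intervalIntegrable
  have hG : CauchySeq fun t => ∫ u in 0..t, ‖A u - A₀ u‖ :=
    (intervalIntegral_tendsto_integral_Ioi 0 (hb.mono_set Set.Ioi_subset_Ici_self)
      tendsto_id).cauchySeq
  refine cauchySeq_of_dist_le_mul_dist (C := M * M) hG
    ((eventually_ge_atTop (0, 0)).mono fun p hp => ?_)
  rw [dist_eq_norm, dist_eq_norm, Real.norm_eq_abs,
    intervalIntegral.integral_interval_sub_left (hbI le_rfl hp.1) (hbI le_rfl hp.2)]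
  exact norm_backward_mul_forward_sub_le hT hS hTbd hSbd (hbI hp.2 hp.1)

end Cook

theorem moller_operator_exists_and_invertible_general
    {H : Type*} [NormedAddCommGroup H] [InnerProductSpace ℂ H] [CompleteSpace H]
    (M : ℝ)
    (A A₀ : ℝ → H →L[ℂ] H)
    (U U₀ : ℝ → ℝ → H →L[ℂ] H)
    (hUbd : ∀ t s : ℝ, ‖U t s‖ ≤ M) (hU₀bd : ∀ t s : ℝ, ‖U₀ t s‖ ≤ M)
    (hUderiv : ∀ (x : H) (t : ℝ),
      HasDerivAt (fun t' : ℝ => U 0 t' x) (-(Complex.I • U 0 t (A t x))) t)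
    (hU₀deriv : ∀ (x : H) (t : ℝ),
      HasDerivAt (fun t' : ℝ => U₀ t' 0 x) (Complex.I • A₀ t (U₀ t 0 x)) t)
    (hUinv : ∀ t : ℝ, U 0 t ∘L U t 0 = 1 ∧ U t 0 ∘L U 0 t = 1)
    (hU₀inv : ∀ t : ℝ, U₀ 0 t ∘L U₀ t 0 = 1 ∧ U₀ t 0 ∘L U₀ 0 t = 1)
    (hdiff : IntegrableOn (fun t : ℝ => ‖A t - A₀ t‖) (Set.Ici 0)) :
    ∃ W V : H →L[ℂ] H,
      Tendsto (fun t : ℝ => U 0 t ∘L U₀ t 0) atTop (nhds W) ∧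
      Tendsto (fun t : ℝ => U₀ 0 t ∘L U t 0) atTop (nhds V) ∧
      W ∘L V = 1 ∧ V ∘L W = 1 := by
  have mul_mul_mul_eq_one {a a' b b' : H →L[ℂ] H} (ha : a * a' = 1) (hb : b * b' = 1) :
      a * b * (b' * a') = 1 := by
    rw [mul_assoc, ← mul_assoc b, hb, one_mul, ha]
  have hφψ (t : ℝ) : U 0 t * U₀ t 0 * (U₀ 0 t * U t 0) = 1 :=
    mul_mul_mul_eq_one (hUinv t).1 (hU₀inv t).2
  have hψφ (t : ℝ) : U₀ 0 t * U t 0 * (U 0 t * U₀ t 0) = 1 :=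
    mul_mul_mul_eq_one (hU₀inv t).1 (hUinv t).2
  have hφ : CauchySeq fun t => U 0 t * U₀ t 0 :=
    cauchySeq_backward_mul_forward hUderiv hU₀deriv (hUbd 0) (hU₀bd · 0) hdiff
  have hψ : CauchySeq fun t => U₀ 0 t * U t 0 :=
    hφ.of_mul_eq_one hφψ hψφ fun t => norm_mul_le_of_le (hU₀bd 0 t) (hUbd t 0)
  obtain ⟨W, hW⟩ := cauchySeq_tendsto_of_complete hφ
  obtain ⟨V, hV⟩ := cauchySeq_tendsto_of_complete hψ
  exact ⟨W, V, hW, hV, mul_eq_one_of_tendsto hW hV hφψ, mul_eq_one_of_tendsto hV hW hψφ⟩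

/-- Existence and invertibility of the (out) Møller/wave operator by the Cook argument:
if `U` and `U₀` are uniformly bounded invertible evolution families generated by `A` and
`A₀` respectively, and `∫₀^∞ ‖A(t) - A₀(t)‖ dt < ∞`, then
`W = lim_{t→+∞} U(0,t) U₀(t,0)` and `V = lim_{t→+∞} U₀(0,t) U(t,0)` exist in operator
norm and are mutually inverse. -/
theorem moller_operator_exists_and_invertible
    {H : Type*} [NormedAddCommGroup H] [InnerProductSpace ℂ H] [CompleteSpace H]
    (M : ℝ) (hM : 0 ≤ M)
    (A A₀ : ℝ → H →L[ℂ] H) (hA : Continuous A) (hA₀ : Continuous A₀)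
    (U U₀ : ℝ → ℝ → H →L[ℂ] H)
    (hUbd : ∀ t s : ℝ, ‖U t s‖ ≤ M) (hU₀bd : ∀ t s : ℝ, ‖U₀ t s‖ ≤ M)
    (hUid : ∀ s : ℝ, U s s = 1) (hU₀id : ∀ s : ℝ, U₀ s s = 1)
    (hUderiv : ∀ (x : H) (t : ℝ),
      HasDerivAt (fun t' : ℝ => U 0 t' x) (-(Complex.I • U 0 t (A t x))) t)
    (hU₀deriv : ∀ (x : H) (t : ℝ),
      HasDerivAt (fun t' : ℝ => U₀ t' 0 x) (Complex.I • A₀ t (U₀ t 0 x)) t)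
    (hUinv : ∀ t : ℝ, U 0 t ∘L U t 0 = 1 ∧ U t 0 ∘L U 0 t = 1)
    (hU₀inv : ∀ t : ℝ, U₀ 0 t ∘L U₀ t 0 = 1 ∧ U₀ t 0 ∘L U₀ 0 t = 1)
    (hdiff : IntegrableOn (fun t : ℝ => ‖A t - A₀ t‖) (Set.Ici 0)) :
    ∃ W V : H →L[ℂ] H,
      Tendsto (fun t : ℝ => U 0 t ∘L U₀ t 0) atTop (nhds W) ∧
      Tendsto (fun t : ℝ => U₀ 0 t ∘L U t 0) atTop (nhds V) ∧
      W ∘L V = 1 ∧ V ∘L W = 1 :=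
  moller_operator_exists_and_invertible_general M A A₀ U U₀ hUbd hU₀bd hUderiv hU₀deriv hUinv hU₀inv
    hdiff
end
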